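/- arXiv:math/0406302 — 2 statements merged into one kernel-verified Lean document; each statement's English description precedes it below -/
import Mathlib

section
/- Let (D, ≤, u) be a dimension group of rank at least 2 and Φ an order-preserving automorphism with Φ(u) = q·u for a positive rational q. If there exists a nonzero d ∈ D with Φ(d) = −d, then q = 1. -/
/-!
Write `r(d)` for the least rational `t` with `t • u ≥ d`; in a dimension group it exists, since
in a copy of `ℤᵏ` containing `u` and `d` it is the largest coordinate ratio `dᵢ / uᵢ`. An order
automorphism `Ψ` with `Ψ u = c • u`, `0 ≤ c`, satisfies `r(Ψ x) ≤ c r(x)`. If moreover `Ψ d = -d`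
and `c < 1`, then `r(-d) ≤ c r(d) ≤ c² r(-d)` and symmetrically, so `r(d), r(-d) ≤ 0`, i.e.
`d ≤ 0 ≤ d`. For `q ≠ 1` this applies to `Φ` or to `Φ⁻¹`.
-/

/-- `q • u ≥ d` for a rational `q`, interpreted by clearing denominators: for every
representation `q = a / b` with `b > 0` we have `b • d ≤ a • u`. -/
def ratGe {D : Type*} [AddCommGroup D] [PartialOrder D] (u d : D) (q : ℚ) : Prop :=
  ∀ a b : ℤ, 0 < b → q = (a : ℚ) / (b : ℚ) → b • d ≤ a • u

/-- `q • u ≤ d` for a rational `q`, interpreted by clearing denominators. -/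
def ratLe {D : Type*} [AddCommGroup D] [PartialOrder D] (u d : D) (q : ℚ) : Prop :=
  ∀ a b : ℤ, 0 < b → q = (a : ℚ) / (b : ℚ) → a • u ≤ b • d

/-- A dimension group: a countable partially ordered abelian group (translation
invariant order) with order unit `u`, in which every finite subset is contained in a
subgroup order-isomorphic to a finite direct power of `(ℤ, ≤)`. -/
structure IsDimensionGroup (D : Type*) [AddCommGroup D] [PartialOrder D] (u : D) : Prop where
  add_le_add : ∀ a b c : D, a ≤ b → a + c ≤ b + c
  countable : Countable D
  unit_nonneg : 0 ≤ u
  unit_arch : ∀ x : D, ∃ n : ℕ, 0 < n ∧ x ≤ (n : ℤ) • u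
  locallyZ : ∀ s : Finset D, ∃ (k : ℕ) (S : AddSubgroup D) (e : S ≃+ (Fin k → ℤ)),
    (∀ x ∈ s, x ∈ S) ∧ ∀ a b : S, a ≤ b ↔ e a ≤ e b

/-- `r` is `r(d)` in the paper: the rationals `a / b` with `b • d ≤ a • u` are exactly those
`≥ r`, independently of the representation of `a / b`. -/
def IsLeastRatUpperBound {D : Type*} [AddCommGroup D] [PartialOrder D] (u d : D) (r : ℚ) :
    Prop :=
  ∀ a b : ℤ, 0 < b → (b • d ≤ a • u ↔ r ≤ a / b)

section

variable {D : Type*} [AddCommGroup D] [PartialOrder D] {u d : D} {r : ℚ}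

theorem isLeastRatUpperBound_map_iff {E : Type*} [AddCommGroup E] [PartialOrder E]
    (f : D →+ E) (hf : ∀ x y, f x ≤ f y ↔ x ≤ y) :
    IsLeastRatUpperBound (f u) (f d) r ↔ IsLeastRatUpperBound u d r := by
  simp only [IsLeastRatUpperBound, ← map_zsmul, hf]

theorem IsLeastRatUpperBound.nonpos_iff (hr : IsLeastRatUpperBound u d r) : d ≤ 0 ↔ r ≤ 0 := by
  simpa using hr 0 1 one_pos

theorem IsLeastRatUpperBound.le_mul_of_map [IsOrderedAddMonoid D] {Ψ : D →+ D}
    (hΨ : Monotone Ψ) {a₀ b₀ : ℤ} (hb₀ : 0 < b₀) (hΨu : b₀ • Ψ u = a₀ • u) {s : ℚ}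
    (hr : IsLeastRatUpperBound u d r) (hs : IsLeastRatUpperBound u (Ψ d) s) :
    s ≤ a₀ / b₀ * r := by
  have hden : (0 : ℤ) < r.den := by exact_mod_cast r.pos
  have hd : (r.den : ℤ) • d ≤ r.num • u :=
    (hr _ _ hden).2 (by rw [Int.cast_natCast, Rat.num_div_den])
  have hΨd : (b₀ * r.den) • Ψ d ≤ (a₀ * r.num) • u :=
    calc (b₀ * r.den) • Ψ d = b₀ • Ψ ((r.den : ℤ) • d) := by rw [map_zsmul, mul_smul]
      _ ≤ b₀ • Ψ (r.num • u) := zsmul_le_zsmul_right hb₀.le (hΨ hd)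
      _ = (a₀ * r.num) • u := by rw [map_zsmul, smul_comm, hΨu, smul_smul, mul_comm]
  have := (hs _ _ (mul_pos hb₀ hden)).1 hΨd
  rwa [Int.cast_mul, Int.cast_mul, mul_div_mul_comm, Int.cast_natCast, Rat.num_div_den] at this

theorem eq_zero_of_map_eq_neg [IsOrderedAddMonoid D] {Ψ : D →+ D} (hΨ : Monotone Ψ)
    {a₀ b₀ : ℤ} (ha₀ : 0 ≤ a₀) (hab : a₀ < b₀) (hΨu : b₀ • Ψ u = a₀ • u) (hΨd : Ψ d = -d)
    {s : ℚ} (hr : IsLeastRatUpperBound u d r) (hs : IsLeastRatUpperBound u (-d) s) : d = 0 := by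
  have hb₀ : 0 < b₀ := ha₀.trans_lt hab
  set c : ℚ := a₀ / b₀
  have hc₀ : 0 ≤ c := by positivity
  have hc₁ : c < 1 := (div_lt_one (by exact_mod_cast hb₀)).2 (by exact_mod_cast hab)
  have hsr : s ≤ c * r := hr.le_mul_of_map hΨ hb₀ hΨu (by rwa [hΨd])
  have hrs : r ≤ c * s := hs.le_mul_of_map hΨ hb₀ hΨu (by rwa [map_neg, hΨd, neg_neg])
  have hc : c * c < 1 := by nlinarith
  have hr₀ : r ≤ 0 := by
    by_contra! hr₀
    nlinarith [mul_le_mul_of_nonneg_left hsr hc₀, mul_lt_mul_of_pos_right hc hr₀]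
  have hs₀ : s ≤ 0 := by
    by_contra! hs₀
    nlinarith [mul_le_mul_of_nonneg_left hrs hc₀, mul_lt_mul_of_pos_right hc hs₀]
  exact le_antisymm (hr.nonpos_iff.2 hr₀) (neg_nonpos.1 (hs.nonpos_iff.2 hs₀))

theorem Pi.exists_isLeastRatUpperBound {ι : Type*} [Fintype ι] [Nonempty ι] {v : ι → ℤ}
    (hv : ∀ i, 0 < v i) (w : ι → ℤ) : ∃ r : ℚ, IsLeastRatUpperBound v w r := by
  refine ⟨Finset.univ.sup' Finset.univ_nonempty fun i ↦ (w i : ℚ) / v i, fun a b hb ↦ ?_⟩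
  rw [Finset.sup'_le_iff, Pi.le_def]
  refine forall_congr' fun i ↦ ?_
  rw [div_le_div_iff₀ (by exact_mod_cast hv i) (by exact_mod_cast hb)]
  simp only [Finset.mem_univ, true_implies, Pi.smul_apply, smul_eq_mul, mul_comm (w i : ℚ)]
  exact_mod_cast Iff.rfl

end

namespace IsDimensionGroup

variable {D : Type*} [AddCommGroup D] [PartialOrder D] {u : D}

theorem isOrderedAddMonoid (h : IsDimensionGroup D u) : IsOrderedAddMonoid D where
  add_le_add_left a b hab c := by simpa only [add_comm] using h.add_le_add a b c hab

theorem unit_ne_zero (h : IsDimensionGroup D u) [Nontrivial D] : u ≠ 0 := by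
  intro hu
  obtain ⟨x, hx⟩ := exists_ne (0 : D)
  have hle : ∀ y : D, y ≤ 0 := fun y ↦ by
    obtain ⟨n, -, hn⟩ := h.unit_arch y
    simpa [hu] using hn
  have := h.isOrderedAddMonoid
  exact hx (le_antisymm (hle x) (neg_nonpos.1 (hle (-x))))

theorem coord_unit_pos (h : IsDimensionGroup D u) {k : ℕ} {S : AddSubgroup D}
    (e : S ≃+ (Fin k → ℤ)) (he : ∀ a b : S, a ≤ b ↔ e a ≤ e b) (hu : u ∈ S) (i : Fin k) :
    0 < e ⟨u, hu⟩ i := by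
  obtain ⟨n, -, hn⟩ := h.unit_arch (e.symm (Pi.single i 1))
  have hle : e.symm (Pi.single i 1) ≤ (n : ℤ) • (⟨u, hu⟩ : S) := by
    rwa [← Subtype.coe_le_coe, AddSubgroup.coe_zsmul]
  have hi := (he _ _).1 hle i
  simp only [AddEquiv.apply_symm_apply, map_zsmul, Pi.single_eq_same, Pi.smul_apply,
    smul_eq_mul] at hi
  exact pos_of_mul_pos_right (one_pos.trans_le hi) (Int.natCast_nonneg n)

theorem exists_isLeastRatUpperBound (h : IsDimensionGroup D u) (hu : u ≠ 0) (d : D) :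
    ∃ r : ℚ, IsLeastRatUpperBound u d r := by
  classical
  obtain ⟨k, S, e, hmem, he⟩ := h.locallyZ {u, d}
  have huS : u ∈ S := hmem u (by simp)
  have hdS : d ∈ S := hmem d (by simp)
  have : Nonempty (Fin k) := by
    rw [← not_isEmpty_iff]
    intro
    have : (⟨u, huS⟩ : S) = 0 := e.injective (Subsingleton.elim _ _)
    exact hu (congrArg Subtype.val this)
  obtain ⟨r, hr⟩ := Pi.exists_isLeastRatUpperBound (h.coord_unit_pos e he huS) (e ⟨d, hdS⟩)
  have hS : IsLeastRatUpperBound (⟨u, huS⟩ : S) ⟨d, hdS⟩ r :=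
    (isLeastRatUpperBound_map_iff e.toAddMonoidHom fun a b ↦ (he a b).symm).1 hr
  exact ⟨r, (isLeastRatUpperBound_map_iff S.subtype fun _ _ ↦ Subtype.coe_le_coe).2 hS⟩

end IsDimensionGroup

theorem stmt16_general {D : Type*} [AddCommGroup D] [PartialOrder D] (u : D)
    (h : IsDimensionGroup D u)
    (Φ : D ≃+ D) (hord : ∀ x y : D, x ≤ y ↔ Φ x ≤ Φ y)
    (q : ℚ) (hq : 0 < q) (hΦu : (q.den : ℤ) • Φ u = q.num • u)
    (d : D) (hd : d ≠ 0) (hneg : Φ d = -d) : q = 1 := by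
  have := h.isOrderedAddMonoid
  have : Nontrivial D := ⟨⟨d, 0, hd⟩⟩
  obtain ⟨r, hr⟩ := h.exists_isLeastRatUpperBound h.unit_ne_zero d
  obtain ⟨s, hs⟩ := h.exists_isLeastRatUpperBound h.unit_ne_zero (-d)
  have hnum : 0 < q.num := Rat.num_pos.2 hq
  rcases lt_trichotomy q 1 with hq1 | hq1 | hq1
  · exact absurd (eq_zero_of_map_eq_neg (Ψ := Φ.toAddMonoidHom) (fun x y ↦ (hord x y).1)
      hnum.le (Rat.num_lt_denom_iff.2 hq1) hΦu hneg hr hs) hd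
  · exact hq1
  · have hden : (q.den : ℤ) < q.num := by
      rw [← Rat.num_div_den q] at hq1
      exact_mod_cast (one_lt_div (by positivity)).1 hq1
    have hΦsymm_u : q.num • Φ.symm u = (q.den : ℤ) • u := by
      rw [← map_zsmul, ← hΦu, map_zsmul, Φ.symm_apply_apply]
    have hΦsymm_d : Φ.symm d = -d := by
      rw [Φ.symm_apply_eq, map_neg, hneg, neg_neg]
    have hΦsymm : Monotone Φ.symm := fun x y hxy ↦ (hord _ _).2 (by simpa using hxy)
    exact absurd (eq_zero_of_map_eq_neg (Ψ := Φ.symm.toAddMonoidHom) hΦsymm (by positivity)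
      hden hΦsymm_u hΦsymm_d hr hs) hd

/-- In a dimension group of rank at least 2, an order-preserving
automorphism `Φ` with `Φ u = q • u` (`q` a positive rational) negating some nonzero
element must have `q = 1`. -/
theorem stmt16 {D : Type*} [AddCommGroup D] [PartialOrder D] (u : D)
    (h : IsDimensionGroup D u)
    (hrank : ∃ f : Fin 2 → D, LinearIndependent ℤ f)
    (Φ : D ≃+ D) (hord : ∀ x y : D, x ≤ y ↔ Φ x ≤ Φ y)
    (q : ℚ) (hq : 0 < q) (hΦu : (q.den : ℤ) • Φ u = q.num • u)
    (d : D) (hd : d ≠ 0) (hneg : Φ d = -d) : q = 1 :=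
  stmt16_general u h Φ hord q hq hΦu d hd hneg
end

section
/- Let (D, ≤, u) be a dimension group of rank at least 3 and Φ an order-preserving automorphism with Φ(u) = u such that Φ(d) + d ∈ ℚu for all d. Then a contradiction follows; i.e., no such Φ exists. -/
/-!
Write `Φ d + d = q(d) • u` with `q(d) ∈ ℚ`; `q` is additive because `Φ` is (and `u` has
infinite order). As `Φ` is an order automorphism fixing `u`, it turns `0 ≤ d` into
`d ≤ q(d) • u`, and `d ≤ t • u` into `(q(d) - t) • u ≤ d`. Inside a copy of `ℤᵏ` (`k ≥ 3`)
containing `u = v` (all `vᵢ > 0`), the first rule gives `q(eᵢ) ≥ 1 / vᵢ` for the basis vectors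
`e₀, e₁`, and the second, read off in the third coordinate where `e₀ + e₁` vanishes, gives
`q(e₀ + e₁) ≤ 1 / min v₀ v₁ < 1 / v₀ + 1 / v₁`.
-/

theorem IsDimensionGroup.isOrderedAddMonoid_s18 {D : Type*} [AddCommGroup D] [PartialOrder D]
    {u : D} (h : IsDimensionGroup D u) : IsOrderedAddMonoid D :=
  ⟨fun a b hab c => h.add_le_add a b c hab,
    fun a b hab c => by simpa only [add_comm c] using h.add_le_add a b c hab⟩

theorem IsDimensionGroup.exists_intPi_embedding {D : Type*} [AddCommGroup D] [PartialOrder D]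
    {u : D} (h : IsDimensionGroup D u) (s : Finset D) :
    ∃ (k : ℕ) (ι : (Fin k → ℤ) →+ D), (∀ x y, ι x ≤ ι y ↔ x ≤ y) ∧ ∀ d ∈ s, d ∈ Set.range ι := by
  obtain ⟨k, S, e, hs, he⟩ := h.locallyZ s
  refine ⟨k, S.subtype.comp e.symm.toAddMonoidHom, fun x y => ?_,
    fun d hd => ⟨e ⟨d, hs d hd⟩, by simp⟩⟩
  simpa using he (e.symm x) (e.symm y)

theorem IsDimensionGroup.unit_coord_pos {D : Type*} [AddCommGroup D] [PartialOrder D] {u : D}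
    (h : IsDimensionGroup D u) {k : ℕ} {ι : (Fin k → ℤ) →+ D} (hι : ∀ x y, ι x ≤ ι y ↔ x ≤ y)
    {v : Fin k → ℤ} (hv : ι v = u) (i : Fin k) : 0 < v i := by
  obtain ⟨N, -, hle⟩ := h.unit_arch (ι (Pi.single i 1))
  rw [← hv, ← map_zsmul, hι] at hle
  have hN' : 1 ≤ (N : ℤ) * v i := by simpa using hle i
  exact pos_of_mul_pos_right (by omega) (Int.natCast_nonneg N)

theorem le_of_linearIndependent_of_mem_range {D : Type*} [AddCommGroup D] {n k : ℕ}
    (ι : (Fin k → ℤ) →+ D) {f : Fin n → D} (hf : LinearIndependent ℤ f)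
    (hfι : ∀ i, f i ∈ Set.range ι) : n ≤ k := by
  choose g hg using hfι
  have hg' : LinearIndependent ℤ g :=
    LinearIndependent.of_comp ι.toIntLinearMap (by convert hf; ext; simp [hg])
  simpa using hg'.fintype_card_le_finrank

section Reflection

variable {D : Type*} [AddCommGroup D] [PartialOrder D] [IsOrderedAddMonoid D]
  {Φ : D ≃+ D} {u d : D} {a b : ℤ}

theorem zsmul_le_of_nonneg_of_zsmul_map_add_self (hΦ : ∀ x y, x ≤ y ↔ Φ x ≤ Φ y) (hb : 0 ≤ b)
    (hd : b • (Φ d + d) = a • u) (h : 0 ≤ d) : b • d ≤ a • u := by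
  have hΦd : 0 ≤ Φ d := by simpa using (hΦ 0 d).1 h
  have key : a • u - b • d = b • Φ d := by rw [← hd]; module
  rw [← sub_nonneg, key]
  exact zsmul_nonneg hΦd hb

theorem sub_zsmul_le_of_le_of_zsmul_map_add_self (hΦ : ∀ x y, x ≤ y ↔ Φ x ≤ Φ y) (hΦu : Φ u = u)
    (hb : 0 ≤ b) (hd : b • (Φ d + d) = a • u) {n c : ℤ} (h : n • d ≤ c • u) :
    (a * n - c * b) • u ≤ (n * b) • d := by
  have hΦd : n • Φ d ≤ c • u := by simpa [hΦu] using (hΦ _ _).1 h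
  have key : (n * b) • d - (a * n - c * b) • u = b • (c • u - n • Φ d) := by
    linear_combination (norm := module) n • hd
  rw [← sub_nonneg, key]
  exact zsmul_nonneg (sub_nonneg.2 hΦd) hb

end Reflection

theorem div_add_div_eq_of_zsmul_eq {D : Type*} [AddCommGroup D] (F : D →+ D) {u d₁ d₂ : D}
    (hu : ∀ m : ℤ, m • u = 0 → m = 0) {a₁ a₂ a₃ b₁ b₂ b₃ : ℤ} (hb₁ : b₁ ≠ 0) (hb₂ : b₂ ≠ 0)
    (hb₃ : b₃ ≠ 0) (h₁ : b₁ • F d₁ = a₁ • u) (h₂ : b₂ • F d₂ = a₂ • u)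
    (h₃ : b₃ • F (d₁ + d₂) = a₃ • u) : (a₃ / b₃ : ℚ) = a₁ / b₁ + a₂ / b₂ := by
  rw [map_add] at h₃
  have key : (a₃ * b₁ * b₂ - a₁ * b₂ * b₃ - a₂ * b₁ * b₃) • u = 0 := by
    linear_combination (norm := module) (b₂ * b₃) • h₁ + (b₁ * b₃) • h₂ - (b₁ * b₂) • h₃
  have hcoef := hu _ key
  field_simp
  norm_cast
  linear_combination hcoef

theorem eq_zero_of_zsmul_eq_zero {D : Type*} [AddCommGroup D] [PartialOrder D] {k : ℕ}
    {ι : (Fin k → ℤ) →+ D} (hι : ∀ x y, ι x ≤ ι y ↔ x ≤ y) {v : Fin k → ℤ} {i : Fin k}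
    (hvi : v i ≠ 0) {m : ℤ} (hm : m • ι v = 0) : m = 0 := by
  have h : m • v = 0 := (OrderEmbedding.ofMapLEIff ι hι).injective <| by
    simpa only [OrderEmbedding.coe_ofMapLEIff, map_zsmul, map_zero] using hm
  simpa [hvi] using congrFun h i

section Coordinates

variable {D : Type*} [AddCommGroup D] [PartialOrder D] [IsOrderedAddMonoid D]
  {Φ : D ≃+ D} {k : ℕ} {ι : (Fin k → ℤ) →+ D} {x v : Fin k → ℤ} {a b : ℤ}

theorem coord_div_le_of_nonneg (hι : ∀ x y, ι x ≤ ι y ↔ x ≤ y)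
    (hΦ : ∀ x y, x ≤ y ↔ Φ x ≤ Φ y) (hb : 0 < b) (hd : b • (Φ (ι x) + ι x) = a • ι v)
    (hx : 0 ≤ x) {i : Fin k} (hvi : 0 < v i) : (x i / v i : ℚ) ≤ a / b := by
  have h := zsmul_le_of_nonneg_of_zsmul_map_add_self hΦ hb.le hd (by simpa using (hι 0 x).2 hx)
  rw [← map_zsmul, ← map_zsmul, hι] at h
  have hcoord : b * x i ≤ a * v i := by simpa using h i
  rw [div_le_div_iff₀ (by exact_mod_cast hvi) (by exact_mod_cast hb)]
  exact_mod_cast (by linarith : x i * b ≤ a * v i)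

theorem div_le_of_le_of_coord_eq_zero (hι : ∀ x y, ι x ≤ ι y ↔ x ≤ y)
    (hΦ : ∀ x y, x ≤ y ↔ Φ x ≤ Φ y) (hΦv : Φ (ι v) = ι v) (hb : 0 < b)
    (hd : b • (Φ (ι x) + ι x) = a • ι v) {n c : ℤ} (hn : 0 < n) (hx : n • x ≤ c • v)
    {l : Fin k} (hxl : x l = 0) (hvl : 0 < v l) : (a / b : ℚ) ≤ c / n := by
  have h := sub_zsmul_le_of_le_of_zsmul_map_add_self hΦ hΦv hb.le hd
    (by rwa [← map_zsmul, ← map_zsmul, hι])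
  rw [← map_zsmul, ← map_zsmul, hι] at h
  have hl : (a * n - c * b) * v l ≤ 0 := by simpa [hxl] using h l
  rw [div_le_div_iff₀ (by exact_mod_cast hb) (by exact_mod_cast hn)]
  exact_mod_cast (by nlinarith : a * n ≤ c * b)

end Coordinates

theorem min_zsmul_single_add_single_le {k : ℕ} {v : Fin k → ℤ} (hv : 0 ≤ v) {i j : Fin k}
    (hij : i ≠ j) : min (v i) (v j) • (Pi.single i 1 + Pi.single j 1 : Fin k → ℤ) ≤ v := by
  intro l
  by_cases hli : l = i
  · subst hli; simp [hij]
  · by_cases hlj : l = j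
    · subst hlj; simp [hli]
    · simpa [hli, hlj] using hv l

theorem inv_add_inv_not_le_inv_min {x y : ℚ} (hx : 0 < x) (hy : 0 < y) :
    ¬ x⁻¹ + y⁻¹ ≤ (min x y)⁻¹ := by
  have := inv_pos.2 hx
  have := inv_pos.2 hy
  rcases min_choice x y with h | h <;> rw [h] <;> linarith

/-- There is no order-preserving automorphism `Φ` of a dimension
group of rank at least 3 with `Φ u = u` and `Φ d + d ∈ ℚu` for all `d`. -/
theorem stmt18 {D : Type*} [AddCommGroup D] [PartialOrder D] (u : D)
    (h : IsDimensionGroup D u)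
    (hrank : ∃ f : Fin 3 → D, LinearIndependent ℤ f)
    (Φ : D ≃+ D) (hord : ∀ x y : D, x ≤ y ↔ Φ x ≤ Φ y)
    (hΦu : Φ u = u)
    (hQu : ∀ d : D, ∃ a b : ℤ, 0 < b ∧ b • (Φ d + d) = a • u) :
    False := by
  classical
  have := h.isOrderedAddMonoid_s18
  obtain ⟨f, hf⟩ := hrank
  obtain ⟨k, ι, hι, hs⟩ := h.exists_intPi_embedding {u, f 0, f 1, f 2}
  obtain ⟨v, rfl⟩ := hs u (by simp)
  have hk := le_of_linearIndependent_of_mem_range ι hf fun i => hs _ (by fin_cases i <;> simp)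
  obtain ⟨i, hi⟩ : ∃ i : Fin 3 → Fin k, Function.Injective i :=
    ⟨Fin.castLE hk, Fin.castLE_injective hk⟩
  have hv := h.unit_coord_pos hι rfl
  set e : Fin 3 → Fin k → ℤ := fun m => Pi.single (i m) 1
  choose a b hb hab using hQu
  have h₀ := coord_div_le_of_nonneg hι hord (hb _) (hab (ι (e 0))) (by simp [e]) (hv (i 0))
  have h₁ := coord_div_le_of_nonneg hι hord (hb _) (hab (ι (e 1))) (by simp [e]) (hv (i 1))
  have h₂ := div_le_of_le_of_coord_eq_zero hι hord hΦu (hb _) (hab (ι (e 0 + e 1)))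
    (lt_min (hv _) (hv _))
    (by
      rw [one_zsmul]
      exact min_zsmul_single_add_single_le (fun l => (hv l).le) (hi.ne (by decide)))
    (l := i 2) (by simp [e, hi.eq_iff]) (hv _)
  have hadd := div_add_div_eq_of_zsmul_eq ((Φ : D →+ D) + AddMonoidHom.id D)
    (fun m => eq_zero_of_zsmul_eq_zero hι (hv (i 0)).ne') (hb _).ne' (hb _).ne' (hb _).ne'
    (hab (ι (e 0))) (hab (ι (e 1))) (hab _)
  rw [map_add] at h₂
  simp only [e, Pi.single_eq_same, Int.cast_one, one_div] at h₀ h₁ h₂ hadd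
  push_cast at h₂
  exact inv_add_inv_not_le_inv_min (Int.cast_pos.2 (hv (i 0))) (Int.cast_pos.2 (hv (i 1)))
    (by linarith)
end
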